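/- Let β = 2 and let φ: (-∞,0] → (0,1) be a solution of -φ'' + 2φ' = φ - φ² with φ(-∞) = 0 and φ' > 0. Then either there exists c > 0 with φ(x) = (c+o(1)) e^x as x → -∞, or there exists c > 0 with φ(x) = (c+o(1)) |x| e^x as x → -∞. -/

import Mathlib

/-!
Dividing out the critical exponential, `ψ = φ e^{-x}` satisfies `ψ'' = ψ² e^x`, so `h = ψ'` is
nondecreasing. The logarithmic derivative `u = φ'/φ` solves the Riccati equation
`u' = φ - (u - 1)²`, whose double root at `1` is the critical-speed degeneracy; once `φ` is small
this forces `u ≥ 3/4` near `-∞`. Hence `φ = O(e^{3x/4})`, `h' = φ² e^{-x} = O(e^{x/2})` is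
integrable, and `h` has a finite limit `L`, which by l'Hôpital is also the limit of `ψ(x)/x`;
positivity of `ψ` gives `L ≤ 0`. If `L < 0` then `ψ ~ -L |x|`. If `L = 0` then `h ≥ 0`, `ψ` is
nondecreasing and `h(x) ≤ ψ(x)² e^x`, so `1/ψ + e^x` is nondecreasing: `ψ` stays away from `0`
and converges to a positive limit.
-/

open Real Filter Set Topology

lemma monotoneOn_Iic_of_hasDerivAt_nonneg {f f' : ℝ → ℝ} {b : ℝ}
    (hf : ∀ t ≤ b, HasDerivAt f (f' t) t) (hf' : ∀ t ≤ b, 0 ≤ f' t) :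
    MonotoneOn f (Iic b) :=
  monotoneOn_of_hasDerivWithinAt_nonneg (convex_Iic b)
    (fun t ht => (hf t ht).continuousAt.continuousWithinAt)
    (fun t ht => (hf t (mem_Iic.1 (interior_subset ht))).hasDerivWithinAt)
    (fun t ht => hf' t (mem_Iic.1 (interior_subset ht)))

lemma MonotoneOn.exists_tendsto_atBot {f : ℝ → ℝ} {b m : ℝ} (hf : MonotoneOn f (Iic b))
    (hm : ∀ t ≤ b, m ≤ f t) : ∃ L, Tendsto f atBot (𝓝 L) := by
  have hmono : Monotone fun t => f (min t b) := fun s t hst =>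
    hf (min_le_right s b) (min_le_right t b) (min_le_min_right b hst)
  refine ⟨_, (tendsto_atBot_ciInf hmono ⟨m, ?_⟩).congr' ?_⟩
  · rintro _ ⟨t, rfl⟩
    exact hm _ (min_le_right t b)
  · filter_upwards [eventually_le_atBot b] with t ht
    rw [min_eq_left ht]

lemma MonotoneOn.le_of_tendsto_atBot {f : ℝ → ℝ} {b L : ℝ} (hf : MonotoneOn f (Iic b))
    (hL : Tendsto f atBot (𝓝 L)) {t : ℝ} (ht : t ≤ b) : L ≤ f t :=
  le_of_tendsto hL (eventually_atBot.2 ⟨t, fun _ hs => hf (hs.trans ht) ht hs⟩)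

lemma exists_le_of_hasDerivAt_le_neg {g g' : ℝ → ℝ} {a c δ m : ℝ} (hδ : 0 < δ)
    (hg : ∀ t ≤ a, HasDerivAt g (g' t) t) (hdec : ∀ t ≤ a, g t < c → g' t ≤ -δ)
    (hm : ∀ t ≤ a, m ≤ g t) : ∃ t ≤ a, c ≤ g t := by
  by_contra! hlt
  have hmono : MonotoneOn (fun t => -(g t + δ * t)) (Iic a) :=
    monotoneOn_Iic_of_hasDerivAt_nonneg
      (fun t ht => ((hg t ht).add ((hasDerivAt_id t).const_mul δ)).neg)
      (fun t ht => by have := hdec t ht (hlt t ht); simp only [mul_one]; linarith)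
  have hmc : m < c := (hm a le_rfl).trans_lt (hlt a le_rfl)
  set t := a - (c - m) / δ
  have hta : t ≤ a := sub_le_self _ (div_nonneg (sub_nonneg.2 hmc.le) hδ.le)
  have hδt : δ * (a - t) = c - m := by simp only [t]; field_simp; ring
  have := hmono hta self_mem_Iic hta
  simp only at this
  linarith [hlt t hta, hm a le_rfl]

lemma le_of_hasDerivAt_neg_of_lt {g g' : ℝ → ℝ} {b c : ℝ}
    (hg : ∀ t ≤ b, HasDerivAt g (g' t) t) (hneg : ∀ t ≤ b, g t < c → g' t < 0)
    (hb : c ≤ g b) {x : ℝ} (hx : x ≤ b) : c ≤ g x := by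
  by_contra! hgx
  have hS : IsClosed (Icc x b ∩ g ⁻¹' Ici c) := ContinuousOn.preimage_isClosed_of_isClosed
    (fun t ht => (hg t ht.2).continuousAt.continuousWithinAt) isClosed_Icc isClosed_Ici
  have hSbdd : BddBelow (Icc x b ∩ g ⁻¹' Ici c) := ⟨x, fun t ht => ht.1.1⟩
  have hmS := hS.csInf_mem ⟨b, ⟨hx, le_rfl⟩, hb⟩ hSbdd
  generalize hm : sInf (Icc x b ∩ g ⁻¹' Ici c) = m at hmS
  have hxm : x < m := hmS.1.1.lt_of_ne (by rintro rfl; exact hgx.not_ge hmS.2)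
  have hanti : StrictAntiOn g (Icc x m) := by
    refine strictAntiOn_of_hasDerivWithinAt_neg (convex_Icc x m)
      (fun t ht => (hg t (ht.2.trans hmS.1.2)).continuousAt.continuousWithinAt)
      (fun t ht => (hg t ((interior_subset ht).2.trans hmS.1.2)).hasDerivWithinAt) ?_
    rw [interior_Icc]
    intro t ht
    have htb : t ≤ b := ht.2.le.trans hmS.1.2
    refine hneg t htb (not_le.1 fun hct => notMem_of_lt_csInf (hm ▸ ht.2) hSbdd ?_)
    exact ⟨⟨ht.1.le, htb⟩, hct⟩
  exact (hanti ⟨le_rfl, hxm.le⟩ ⟨hxm.le, le_rfl⟩ hxm).not_ge (hgx.le.trans hmS.2)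

lemma exists_forall_le_of_hasDerivAt_le_neg {g g' : ℝ → ℝ} {a c δ m : ℝ} (hδ : 0 < δ)
    (hg : ∀ t ≤ a, HasDerivAt g (g' t) t) (hdec : ∀ t ≤ a, g t < c → g' t ≤ -δ)
    (hm : ∀ t ≤ a, m ≤ g t) : ∃ b ≤ a, ∀ t ≤ b, c ≤ g t := by
  obtain ⟨b, hba, hb⟩ := exists_le_of_hasDerivAt_le_neg hδ hg hdec hm
  exact ⟨b, hba, fun t ht => le_of_hasDerivAt_neg_of_lt (fun s hs => hg s (hs.trans hba))
    (fun s hs hlt => (hdec s (hs.trans hba) hlt).trans_lt (neg_neg_of_pos hδ)) hb ht⟩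

lemma le_mul_exp_of_mul_le_hasDerivAt {f f' : ℝ → ℝ} {k b : ℝ}
    (hf : ∀ t ≤ b, HasDerivAt f (f' t) t) (hk : ∀ t ≤ b, k * f t ≤ f' t) {t : ℝ} (ht : t ≤ b) :
    f t ≤ f b * exp (-(k * b)) * exp (k * t) := by
  have hmono : MonotoneOn (fun s => f s * exp (-(k * s))) (Iic b) := by
    have hexp : ∀ s, HasDerivAt (fun s => exp (-(k * s))) (exp (-(k * s)) * -k) s := fun s => by
      simpa using ((hasDerivAt_id s).const_mul k).neg.exp
    refine monotoneOn_Iic_of_hasDerivAt_nonneg (fun s hs => (hf s hs).mul (hexp s)) fun s hs => ?_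
    nlinarith [hk s hs, exp_pos (-(k * s))]
  have := mul_le_mul_of_nonneg_right (hmono ht self_mem_Iic ht) (exp_pos (k * t)).le
  simp only at this
  rwa [mul_assoc (f t), ← exp_add, neg_add_cancel, exp_zero, mul_one] at this

lemma le_of_hasDerivAt_le_mul_exp {f f' : ℝ → ℝ} {K κ b : ℝ} (hK : 0 ≤ K) (hκ : 0 < κ)
    (hf : ∀ t ≤ b, HasDerivAt f (f' t) t) (hf' : ∀ t ≤ b, f' t ≤ K * exp (κ * t))
    {t : ℝ} (ht : t ≤ b) : f b - K / κ * exp (κ * b) ≤ f t := by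
  have hderiv : ∀ s, HasDerivAt (fun s => K / κ * exp (κ * s)) (K * exp (κ * s)) s := fun s => by
    have := (((hasDerivAt_id s).const_mul κ).exp).const_mul (K / κ)
    simp only [id, mul_one] at this
    exact this.congr_deriv (by field_simp)
  have hmono := monotoneOn_Iic_of_hasDerivAt_nonneg (fun s hs => (hderiv s).sub (hf s hs))
    fun s hs => sub_nonneg.2 (hf' s hs)
  have := hmono ht self_mem_Iic ht
  simp only [Pi.sub_apply] at this
  nlinarith [mul_nonneg (div_nonneg hK hκ.le) (exp_pos (κ * t)).le]

lemma tendsto_div_atBot_of_hasDerivAt {f f' : ℝ → ℝ} {L : ℝ}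
    (hf : ∀ᶠ t in atBot, HasDerivAt f (f' t) t) (hf' : Tendsto f' atBot (𝓝 L)) :
    Tendsto (fun t => f t / t) atBot (𝓝 L) := by
  set g := fun t => f t - L * t
  have hsmall : g =o[atBot] id := by
    refine Asymptotics.IsLittleO.of_bound fun ε hε => ?_
    have hnear : ∀ᶠ t in atBot, HasDerivAt f (f' t) t ∧ ‖f' t - L‖ ≤ ε / 2 :=
      hf.and ((tendsto_iff_norm_sub_tendsto_zero.1 hf').eventually
        (eventually_le_nhds (by positivity)))
    obtain ⟨b₁, hb₁⟩ := eventually_atBot.1 hnear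
    set b := min b₁ 0
    have hlip : ∀ t ≤ b, ‖g t - g b‖ ≤ ε / 2 * ‖t - b‖ := fun t ht =>
      Convex.norm_image_sub_le_of_norm_hasDerivWithin_le
        (fun s hs => (((hb₁ s (hs.trans (min_le_left _ _))).1).sub
          ((hasDerivAt_id s).const_mul L)).hasDerivWithinAt)
        (fun s hs => by simpa using (hb₁ s (hs.trans (min_le_left _ _))).2)
        (convex_Iic b) self_mem_Iic ht
    filter_upwards [eventually_le_atBot b, eventually_le_atBot (-(2 / ε * ‖g b‖))] with t htb htg
    have ht0 : t ≤ 0 := htb.trans (min_le_right _ _)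
    have h1 : ‖g t - g b‖ ≤ ε / 2 * -t := by
      refine (hlip t htb).trans ?_
      rw [Real.norm_of_nonpos (sub_nonpos.2 htb)]
      gcongr
      linarith [min_le_right b₁ 0]
    have h2 : ‖g b‖ ≤ ε / 2 * -t := by
      have := mul_le_mul_of_nonneg_left htg (by positivity : (0:ℝ) ≤ ε / 2)
      field_simp at this ⊢
      linarith
    rw [id, Real.norm_of_nonpos ht0]
    linarith [norm_le_norm_sub_add (g t) (g b)]
  refine (zero_add L ▸ hsmall.tendsto_div_nhds_zero.add_const L).congr' ?_
  filter_upwards [eventually_lt_atBot 0] with t ht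
  simp only [g, id]
  field_simp [ht.ne]
  ring

lemma le_sq_mul_exp_of_hasDerivAt {ψ h : ℝ → ℝ} {x : ℝ}
    (hh : ∀ t ≤ x, HasDerivAt h (ψ t ^ 2 * exp t) t) (hψ : MonotoneOn ψ (Iic x))
    (hψ₀ : ∀ t ≤ x, 0 ≤ ψ t) (hlim : Tendsto h atBot (𝓝 0)) : h x ≤ ψ x ^ 2 * exp x := by
  have hmono : MonotoneOn (fun t => ψ x ^ 2 * exp t - h t) (Iic x) :=
    monotoneOn_Iic_of_hasDerivAt_nonneg (fun t ht => ((hasDerivAt_exp t).const_mul _).sub (hh t ht))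
      fun t ht => by
        have := pow_le_pow_left₀ (hψ₀ t ht) (hψ ht self_mem_Iic ht) 2
        nlinarith [exp_pos t]
  have hlim' : Tendsto (fun t => ψ x ^ 2 * exp t - h t) atBot (𝓝 0) := by
    simpa using (tendsto_exp_atBot.const_mul (ψ x ^ 2)).sub hlim
  linarith [hmono.le_of_tendsto_atBot hlim' le_rfl]

lemma exists_pos_tendsto_of_hasDerivAt {ψ h : ℝ → ℝ} {b : ℝ}
    (hψ : ∀ t ≤ b, HasDerivAt ψ (h t) t) (hh : ∀ t ≤ b, HasDerivAt h (ψ t ^ 2 * exp t) t)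
    (hpos : ∀ t ≤ b, 0 < ψ t) (hlim : Tendsto h atBot (𝓝 0)) :
    ∃ c > 0, Tendsto ψ atBot (𝓝 c) := by
  have hψmono : MonotoneOn ψ (Iic b) := monotoneOn_Iic_of_hasDerivAt_nonneg hψ fun t ht =>
    (monotoneOn_Iic_of_hasDerivAt_nonneg hh fun _ _ => by positivity).le_of_tendsto_atBot hlim ht
  have hinv : MonotoneOn (fun t => (ψ t)⁻¹ + exp t) (Iic b) := by
    refine monotoneOn_Iic_of_hasDerivAt_nonneg
      (fun t ht => ((hψ t ht).inv (hpos t ht).ne').add (hasDerivAt_exp t)) fun t ht => ?_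
    have := le_sq_mul_exp_of_hasDerivAt (fun s hs => hh s (hs.trans ht))
      (hψmono.mono (Iic_subset_Iic.2 ht)) (fun s hs => (hpos s (hs.trans ht)).le) hlim
    have := hpos t ht
    rw [neg_div, neg_add_eq_sub, sub_nonneg, div_le_iff₀ (by positivity)]
    linarith
  have hlow : ∀ t ≤ b, ((ψ b)⁻¹ + exp b)⁻¹ ≤ ψ t := fun t ht => by
    simpa using inv_anti₀ (inv_pos.2 (hpos t ht)) (by linarith [hinv ht self_mem_Iic ht, exp_pos t])
  obtain ⟨c, hc⟩ := hψmono.exists_tendsto_atBot hlow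
  refine ⟨c, ?_, hc⟩
  have := hpos b le_rfl
  exact lt_of_lt_of_le (by positivity) (ge_of_tendsto hc (eventually_atBot.2 ⟨b, hlow⟩))

lemma hasDerivAt_deriv_of_contDiff_two {φ : ℝ → ℝ} (hC : ContDiff ℝ 2 φ) (t : ℝ) :
    HasDerivAt (deriv φ) (deriv (deriv φ) t) t :=
  ((hC.deriv' (n := 1)).differentiable one_ne_zero t).hasDerivAt

lemma HasDerivAt.mul_exp_neg {f : ℝ → ℝ} {f' t : ℝ} (hf : HasDerivAt f f' t) :
    HasDerivAt (fun s => f s * Real.exp (-s)) ((f' - f t) * Real.exp (-t)) t :=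
  (hf.mul (hasDerivAt_neg t).exp).congr_deriv (by ring)

section CriticalKPP

variable {φ φ' : ℝ → ℝ} {b : ℝ}

lemma hasDerivAt_div_of_kpp {t : ℝ} (hφ : HasDerivAt φ (φ' t) t)
    (hφ' : HasDerivAt φ' (2 * φ' t - φ t + φ t ^ 2) t) (hpos : φ t ≠ 0) :
    HasDerivAt (fun s => φ' s / φ s) (φ t - (φ' t / φ t - 1) ^ 2) t :=
  (hφ'.div hφ hpos).congr_deriv (by field_simp; ring)

-- For `u = φ'/φ < 3/4` the Riccati term `(u - 1)²` exceeds `1/16`, so `u' ≤ -1/32` once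
-- `φ < 1/32`. Any rate above `1/2` would do: it is what makes `φ² e^{-t}` integrable at `-∞`.
lemma exists_forall_mul_le_deriv_of_kpp (hφ : ∀ t ≤ b, HasDerivAt φ (φ' t) t)
    (hφ' : ∀ t ≤ b, HasDerivAt φ' (2 * φ' t - φ t + φ t ^ 2) t)
    (hpos : ∀ t ≤ b, 0 < φ t) (hmono : ∀ t ≤ b, 0 < φ' t) (hlim : Tendsto φ atBot (𝓝 0)) :
    ∃ a ≤ b, ∀ t ≤ a, 3 / 4 * φ t ≤ φ' t := by
  obtain ⟨a₀, ha₀⟩ :=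
    eventually_atBot.1 (hlim.eventually (gt_mem_nhds (by norm_num : (0:ℝ) < 1 / 32)))
  set a := min a₀ b
  have hab : a ≤ b := min_le_right _ _
  obtain ⟨a', ha'a, ha'⟩ := exists_forall_le_of_hasDerivAt_le_neg (c := 3 / 4) (m := 0)
    (by norm_num : (0:ℝ) < 1 / 32)
    (fun t ht => hasDerivAt_div_of_kpp (hφ t (ht.trans hab)) (hφ' t (ht.trans hab))
      (hpos t (ht.trans hab)).ne')
    (fun t ht hlt => by nlinarith [ha₀ t (ht.trans (min_le_left _ _))])
    (fun t ht => div_nonneg (hmono t (ht.trans hab)).le (hpos t (ht.trans hab)).le)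
  refine ⟨a', ha'a.trans hab, fun t ht => ?_⟩
  have := ha' t ht
  rwa [le_div_iff₀ (hpos t (ht.trans (ha'a.trans hab)))] at this

lemma hasDerivAt_sub_mul_exp_neg_of_kpp {t : ℝ} (hφ : HasDerivAt φ (φ' t) t)
    (hφ' : HasDerivAt φ' (2 * φ' t - φ t + φ t ^ 2) t) :
    HasDerivAt (fun s => (φ' s - φ s) * exp (-s)) (φ t ^ 2 * exp (-t)) t :=
  (hφ'.sub hφ).mul_exp_neg.congr_deriv (by simp only [Pi.sub_apply]; ring)

lemma exists_tendsto_sub_mul_exp_neg_of_kpp (hφ : ∀ t ≤ b, HasDerivAt φ (φ' t) t)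
    (hφ' : ∀ t ≤ b, HasDerivAt φ' (2 * φ' t - φ t + φ t ^ 2) t)
    (hpos : ∀ t ≤ b, 0 < φ t) (hmono : ∀ t ≤ b, 0 < φ' t) (hlim : Tendsto φ atBot (𝓝 0)) :
    ∃ L, Tendsto (fun t => (φ' t - φ t) * exp (-t)) atBot (𝓝 L) := by
  obtain ⟨a, hab, ha⟩ := exists_forall_mul_le_deriv_of_kpp hφ hφ' hpos hmono hlim
  have hh : ∀ t ≤ a, HasDerivAt (fun s => (φ' s - φ s) * exp (-s)) (φ t ^ 2 * exp (-t)) t :=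
    fun t ht => hasDerivAt_sub_mul_exp_neg_of_kpp (hφ t (ht.trans hab)) (hφ' t (ht.trans hab))
  set A := φ a * exp (-(3 / 4 * a))
  have hbound : ∀ t ≤ a, φ t ^ 2 * exp (-t) ≤ A ^ 2 * exp (1 / 2 * t) := fun t ht => by
    have hdecay : φ t ≤ A * exp (3 / 4 * t) :=
      le_mul_exp_of_mul_le_hasDerivAt (fun s hs => hφ s (hs.trans hab)) ha ht
    calc φ t ^ 2 * exp (-t) ≤ (A * exp (3 / 4 * t)) ^ 2 * exp (-t) := by
          gcongr
          exact (hpos t (ht.trans hab)).le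
      _ = A ^ 2 * exp (1 / 2 * t) := by
          rw [mul_pow, mul_assoc, ← exp_nat_mul, ← exp_add]
          ring_nf
  exact (monotoneOn_Iic_of_hasDerivAt_nonneg hh fun t _ => by positivity).exists_tendsto_atBot
    fun t ht => le_of_hasDerivAt_le_mul_exp (sq_nonneg A) (by norm_num) hh hbound ht

end CriticalKPP

/-- Critical-speed decay dichotomy at `-∞`: for `β = 2`, positive monotone solutions
of `-φ'' + 2φ' = φ - φ²` decaying to 0 behave like `c eˣ` or like `c |x| eˣ`. -/
theorem kpp_decay_dichotomy_critical (φ : ℝ → ℝ)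
    (hC : ContDiff ℝ 2 φ)
    (hode : ∀ x ≤ (0 : ℝ), -deriv (deriv φ) x + 2 * deriv φ x = φ x - φ x ^ 2)
    (hrange : ∀ x ≤ (0 : ℝ), 0 < φ x ∧ φ x < 1)
    (hlim : Tendsto φ atBot (nhds 0))
    (hmono : ∀ x ≤ (0 : ℝ), 0 < deriv φ x) :
    (∃ c > (0 : ℝ), Tendsto (fun x => φ x / Real.exp x) atBot (nhds c)) ∨
    (∃ c > (0 : ℝ), Tendsto (fun x => φ x / (|x| * Real.exp x)) atBot (nhds c)) := by
  have hφ : ∀ t ≤ (0 : ℝ), HasDerivAt φ (deriv φ t) t := fun t _ =>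
    (hC.differentiable (by norm_num) t).hasDerivAt
  have hφ' : ∀ t ≤ (0 : ℝ), HasDerivAt (deriv φ) (2 * deriv φ t - φ t + φ t ^ 2) t :=
    fun t ht => (hasDerivAt_deriv_of_contDiff_two hC t).congr_deriv (by linarith [hode t ht])
  have hpos : ∀ t ≤ (0 : ℝ), 0 < φ t := fun t ht => (hrange t ht).1
  set ψ := fun t => φ t * exp (-t)
  obtain ⟨L, hL⟩ := exists_tendsto_sub_mul_exp_neg_of_kpp hφ hφ' hpos hmono hlim
  have hψL : Tendsto (fun t => ψ t / t) atBot (𝓝 L) :=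
    tendsto_div_atBot_of_hasDerivAt (eventually_atBot.2 ⟨0, fun t ht => (hφ t ht).mul_exp_neg⟩) hL
  have hL0 : L ≤ 0 := by
    refine le_of_tendsto hψL ?_
    filter_upwards [eventually_le_atBot 0] with t ht
    exact div_nonpos_of_nonneg_of_nonpos (mul_pos (hpos t ht) (exp_pos _)).le ht
  rcases hL0.lt_or_eq with hL0 | rfl
  · right
    refine ⟨-L, neg_pos.2 hL0, hψL.neg.congr' ?_⟩
    filter_upwards [eventually_lt_atBot 0] with t ht
    simp only [ψ, abs_of_neg ht, exp_neg]
    field_simp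
  · left
    obtain ⟨c, hc, hψc⟩ := exists_pos_tendsto_of_hasDerivAt (fun t ht => (hφ t ht).mul_exp_neg)
      (fun t ht => (hasDerivAt_sub_mul_exp_neg_of_kpp (hφ t ht) (hφ' t ht)).congr_deriv
        (by rw [exp_neg]; field_simp))
      (fun t ht => mul_pos (hpos t ht) (exp_pos _)) hL
    exact ⟨c, hc, hψc.congr fun t => by simp only [exp_neg, div_eq_mul_inv]⟩
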